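/- For every x ∈ f_σ([0,1]) that is not a dyadic rational (and not 0), the fiber f_σ^{-1}(x) is uncountable. -/

import Mathlib

/-- Apply a `k`-block substitution blockwise to a finite word, dropping the
trailing partial block (the paper's truncation convention). -/
def blockApply (k : Nat) (sigma : List Bool -> List Bool) (w : List Bool) : List Bool :=
  if h : 0 < k && k <= w.length then
    sigma (w.take k) ++ blockApply k sigma (w.drop k)
  else []
termination_by w.length
decreasing_by
  simp only [Bool.and_eq_true, decide_eq_true_eq] at h
  simp [List.length_drop]
  omega

/-- The length-`m` prefix of an infinite binary word. -/
def prefixOf (u : Nat -> Bool) (m : Nat) : List Bool := List.ofFn fun i : Fin m => u i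

/-- Value of a finite binary word read as binary digits after the point. -/
noncomputable def valFin (w : List Bool) : ℝ :=
  (((List.range w.length).zip w).map fun p => if p.2 then ((2:ℝ))⁻¹ ^ (p.1 + 1) else 0).sum

/-- Value of an infinite binary word read as binary digits after the point. -/
noncomputable def valInf (u : Nat -> Bool) : ℝ :=
  ∑' i : Nat, if u i then ((2:ℝ))⁻¹ ^ (i + 1) else 0

/-- A word is not eventually zero (it has infinitely many ones). -/
def NEZ (u : Nat -> Bool) : Prop := ∀ n, ∃ m, n ≤ m ∧ u m = true

open Classical in
/-- The unique binary expansion of `x ∈ (0,1]` not ending in `0^∞`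
(junk value, the zero word, if no such expansion exists). -/
noncomputable def tilde (x : ℝ) : Nat -> Bool :=
  if h : ∃ u : Nat -> Bool, NEZ u ∧ valInf u = x then h.choose else fun _ => false

open Classical in
/-- The interval map induced by the erasing `k`-block substitution `sigma`
(with erased block `weps`) acting on binary expansions: `f x = 0.sigma(x̃)`,
with value `0` at `x = 0` (no expansion not ending in `0^∞`) and when
`x̃ = weps^∞`. -/
noncomputable def fSigma (k : Nat) (sigma : List Bool -> List Bool) (weps : List Bool)
    (x : ℝ) : ℝ :=
  if (¬ ∃ u : Nat -> Bool, NEZ u ∧ valInf u = x) ∨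
     (∀ i : Nat, tilde x i = weps.getD (i % k) false) then 0
  else ⨆ n : Nat, valFin (blockApply k sigma (prefixOf (tilde x) (n * k)))

/-- Dyadic rationals (in particular all of `Q₂⁰` within `[0,1]`). -/
def Dyadic01 : Set ℝ := {x | ∃ a b : Nat, x = (a : ℝ) / 2 ^ b}

/-!
Write a preimage `y` of `x` as `valInf u` with `u` not ending in `0^∞`, and cut `u` into
`k`-blocks. Since `x` is not dyadic, infinitely many blocks differ from the erased block `w`,
and `fSigma` only sees the sequence of these kept blocks. Placing the `t`-th kept block at block
position `3t` or `3t + 1` according to a bit `S t`, and `w` everywhere else, gives a preimage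
of `x` for every `S : ℕ → Bool`. The kept blocks differ from `w`, so `S` can be read off the
word, and `valInf` is injective on words not ending in `0^∞`.
-/

open Set

noncomputable def digitTerm (u : ℕ → Bool) (i : ℕ) : ℝ := if u i then (2:ℝ)⁻¹ ^ (i + 1) else 0

lemma digitTerm_nonneg (u : ℕ → Bool) (i : ℕ) : 0 ≤ digitTerm u i := by
  unfold digitTerm; split <;> positivity

lemma digitTerm_le (u : ℕ → Bool) (i : ℕ) : digitTerm u i ≤ (2:ℝ)⁻¹ ^ (i + 1) := by
  unfold digitTerm; split <;> [exact le_rfl; positivity]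

lemma hasSum_inv_two_pow_add (m : ℕ) :
    HasSum (fun i : ℕ => (2:ℝ)⁻¹ ^ (i + m + 1)) ((2:ℝ)⁻¹ ^ m) := by
  have := (hasSum_geometric_of_lt_one (r := (2:ℝ)⁻¹) (by norm_num) (by norm_num)).mul_left
    ((2:ℝ)⁻¹ ^ (m + 1))
  have hterm : (fun i : ℕ => (2:ℝ)⁻¹ ^ (i + m + 1)) = fun i => (2:ℝ)⁻¹ ^ (m + 1) * (2:ℝ)⁻¹ ^ i := by
    funext i; ring
  have hsum : (2:ℝ)⁻¹ ^ (m + 1) * (1 - (2:ℝ)⁻¹)⁻¹ = (2:ℝ)⁻¹ ^ m := by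
    rw [pow_succ, mul_assoc]; norm_num
  rwa [hterm, ← hsum]

lemma summable_digitTerm (u : ℕ → Bool) : Summable (digitTerm u) :=
  (hasSum_inv_two_pow_add 0).summable.of_nonneg_of_le (digitTerm_nonneg u) (digitTerm_le u)

lemma tsum_digitTerm_add_le (u : ℕ → Bool) (m : ℕ) :
    ∑' i, digitTerm u (i + m) ≤ (2:ℝ)⁻¹ ^ m :=
  hasSum_le (fun i => digitTerm_le u (i + m))
    ((summable_nat_add_iff m).2 (summable_digitTerm u)).hasSum (hasSum_inv_two_pow_add m)

lemma tsum_digitTerm_add_pos {u : ℕ → Bool} (hu : NEZ u) (m : ℕ) :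
    0 < ∑' i, digitTerm u (i + m) := by
  obtain ⟨i, hi, hui⟩ := hu m
  refine ((summable_nat_add_iff m).2 (summable_digitTerm u)).tsum_pos
    (fun j => digitTerm_nonneg u (j + m)) (i - m) ?_
  rw [Nat.sub_add_cancel hi, digitTerm, if_pos hui]
  positivity

lemma valInf_nonneg (u : ℕ → Bool) : 0 ≤ valInf u :=
  tsum_nonneg (digitTerm_nonneg u)

lemma valInf_le_one (u : ℕ → Bool) : valInf u ≤ 1 := by
  show ∑' i, digitTerm u i ≤ 1
  simpa only [add_zero, pow_zero] using tsum_digitTerm_add_le u 0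

lemma valInf_eq_sum_add_tsum (u : ℕ → Bool) (m : ℕ) :
    valInf u = ∑ i ∈ Finset.range m, digitTerm u i + ∑' i, digitTerm u (i + m) :=
  ((summable_digitTerm u).sum_add_tsum_nat_add m).symm

lemma valInf_lt_of_toLex_lt {u v : ℕ → Bool} (hv : NEZ v) (huv : toLex u < toLex v) :
    valInf u < valInf v := by
  obtain ⟨i, hagree : ∀ j < i, u j = v j, hlt⟩ := huv
  obtain ⟨hui, hvi⟩ : u i = false ∧ v i = true := Bool.lt_iff.1 hlt
  have hprefix : ∑ j ∈ Finset.range i, digitTerm u j = ∑ j ∈ Finset.range i, digitTerm v j :=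
    Finset.sum_congr rfl fun j hj => by rw [digitTerm, digitTerm, hagree j (Finset.mem_range.1 hj)]
  have hdu : digitTerm u i = 0 := by simp [digitTerm, hui]
  have hdv : digitTerm v i = (2:ℝ)⁻¹ ^ (i + 1) := by simp [digitTerm, hvi]
  rw [valInf_eq_sum_add_tsum u (i + 1), valInf_eq_sum_add_tsum v (i + 1),
    Finset.sum_range_succ, Finset.sum_range_succ, hprefix, hdu, hdv]
  linarith [tsum_digitTerm_add_le u (i + 1), tsum_digitTerm_add_pos hv (i + 1)]

lemma valInf_injOn : InjOn valInf {u | NEZ u} := by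
  intro u hu v hv huv
  rcases lt_trichotomy (toLex u) (toLex v) with h | h | h
  · exact absurd huv (valInf_lt_of_toLex_lt hv h).ne
  · exact h
  · exact absurd huv (valInf_lt_of_toLex_lt hu h).ne'

lemma valFin_append_singleton (w : List Bool) (b : Bool) :
    valFin (w ++ [b]) = valFin w + if b then (2:ℝ)⁻¹ ^ (w.length + 1) else 0 := by
  simp only [valFin, List.length_append, List.length_singleton, List.range_succ]
  rw [List.zip_append (by simp)]
  simp

lemma valFin_nonneg (w : List Bool) : 0 ≤ valFin w :=
  List.sum_nonneg fun _ hx => by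
    obtain ⟨p, _, rfl⟩ := List.mem_map.1 hx
    split <;> positivity

lemma valFin_append (w z : List Bool) :
    valFin (w ++ z) = valFin w + (2:ℝ)⁻¹ ^ w.length * valFin z := by
  induction z using List.reverseRecOn with
  | nil => simp [valFin]
  | append_singleton z b ih =>
    rw [← List.append_assoc, valFin_append_singleton, ih, valFin_append_singleton,
      List.length_append]
    split <;> ring

lemma valFin_le_valFin_append (w z : List Bool) : valFin w ≤ valFin (w ++ z) := by
  rw [valFin_append]
  have := valFin_nonneg z
  have : (0:ℝ) < (2:ℝ)⁻¹ ^ w.length := by positivity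
  nlinarith

lemma zero_mem_dyadic01 : (0:ℝ) ∈ Dyadic01 := ⟨0, 0, by simp⟩

lemma add_mem_dyadic01 {x y : ℝ} (hx : x ∈ Dyadic01) (hy : y ∈ Dyadic01) :
    x + y ∈ Dyadic01 := by
  obtain ⟨a, b, rfl⟩ := hx
  obtain ⟨c, d, rfl⟩ := hy
  refine ⟨a * 2 ^ d + c * 2 ^ b, b + d, ?_⟩
  push_cast
  rw [pow_add]
  field_simp

lemma valFin_mem_dyadic01 (w : List Bool) : valFin w ∈ Dyadic01 := by
  induction w using List.reverseRecOn with
  | nil => simpa [valFin] using zero_mem_dyadic01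
  | append_singleton w b ih =>
    rw [valFin_append_singleton]
    refine add_mem_dyadic01 ih ?_
    split
    · exact ⟨1, w.length + 1, by simp⟩
    · exact zero_mem_dyadic01

def blockAt (k : ℕ) (u : ℕ → Bool) (p : ℕ) : List Bool :=
  List.ofFn fun i : Fin k => u (p * k + i)

def ofBlocks (k : ℕ) (β : ℕ → List Bool) (n : ℕ) : Bool :=
  (β (n / k)).getD (n % k) false

lemma length_blockAt (k : ℕ) (u : ℕ → Bool) (p : ℕ) : (blockAt k u p).length = k := by
  simp [blockAt]

lemma true_mem_blockAt_iff {k : ℕ} {u : ℕ → Bool} {p : ℕ} :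
    true ∈ blockAt k u p ↔ ∃ i : Fin k, u (p * k + i) = true := by
  simp only [blockAt, List.mem_ofFn]

lemma blockAt_ofBlocks {k : ℕ} (hk : 0 < k) {β : ℕ → List Bool} {p : ℕ}
    (hβ : (β p).length = k) : blockAt k (ofBlocks k β) p = β p := by
  refine List.ext_getElem (by simp [blockAt, hβ]) fun i hi _ => ?_
  have hik : i < k := by simpa [blockAt] using hi
  have hdiv : (p * k + i) / k = p := by
    rw [Nat.add_comm, Nat.add_mul_div_right _ _ hk, Nat.div_eq_of_lt hik, zero_add]
  have hiβ : i < (β p).length := hβ ▸ hik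
  simp [blockAt, ofBlocks, hdiv, Nat.mod_eq_of_lt hik, hiβ]

lemma ofBlocks_blockAt {k : ℕ} (hk : 0 < k) (u : ℕ → Bool) : ofBlocks k (blockAt k u) = u := by
  funext n
  rw [ofBlocks, List.getD_eq_getElem _ _ (by simpa [length_blockAt] using Nat.mod_lt n hk)]
  simp [blockAt, Nat.div_add_mod']

lemma nez_iff_forall_exists_true_mem_blockAt {k : ℕ} (hk : 0 < k) {u : ℕ → Bool} :
    NEZ u ↔ ∀ n, ∃ p ≥ n, true ∈ blockAt k u p := by
  constructor
  · intro hu n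
    obtain ⟨m, hm, hum⟩ := hu (n * k)
    refine ⟨m / k, (Nat.le_div_iff_mul_le hk).2 hm, true_mem_blockAt_iff.2
      ⟨⟨m % k, Nat.mod_lt m hk⟩, ?_⟩⟩
    simpa [Nat.div_add_mod'] using hum
  · intro h n
    obtain ⟨p, hp, hmem⟩ := h n
    obtain ⟨i, hi⟩ := true_mem_blockAt_iff.1 hmem
    have := Nat.le_mul_of_pos_right p hk
    exact ⟨p * k + i, by omega, hi⟩

lemma prefixOf_mul (k : ℕ) (u : ℕ → Bool) (n : ℕ) :
    prefixOf u (n * k) = ((List.range n).map (blockAt k u)).flatten := by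
  induction n with
  | zero => simp [prefixOf]
  | succ n ih =>
    rw [List.range_succ, List.map_append, List.flatten_append, ← ih]
    refine List.ext_getElem (by simp [prefixOf, blockAt, Nat.succ_mul]) fun i h1 h2 => ?_
    simp only [prefixOf, List.getElem_ofFn, List.getElem_append, List.length_ofFn]
    split
    · simp
    · simp only [List.map_cons, blockAt, List.map_nil, List.flatten_cons, List.flatten_nil,
        List.append_nil, List.getElem_ofFn]
      congr 1
      omega

lemma blockApply_append_of_length_eq {k : ℕ} (hk : 0 < k) (σ : List Bool → List Bool)
    {w : List Bool} (hw : w.length = k) (z : List Bool) :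
    blockApply k σ (w ++ z) = σ w ++ blockApply k σ z := by
  rw [blockApply, dif_pos (by simp [hw, hk]), List.take_left' hw, List.drop_left' hw]

lemma blockApply_flatten {k : ℕ} (hk : 0 < k) (σ : List Bool → List Bool)
    (L : List (List Bool)) (hL : ∀ w ∈ L, w.length = k) :
    blockApply k σ L.flatten = (L.map σ).flatten := by
  induction L with
  | nil => rw [blockApply, dif_neg (by simp [hk.ne'])]; rfl
  | cons w L ih =>
    rw [List.flatten_cons, blockApply_append_of_length_eq hk σ (hL w (by simp)),
      ih fun w hw => hL w (by simp [hw])]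
    rfl

def partialImage (σ : List Bool → List Bool) (β : ℕ → List Bool) (n : ℕ) : List Bool :=
  ((List.range n).map (σ ∘ β)).flatten

section PartialImage

variable (σ : List Bool → List Bool) (β : ℕ → List Bool)

lemma partialImage_succ (n : ℕ) : partialImage σ β (n + 1) = partialImage σ β n ++ σ (β n) := by
  simp [partialImage, List.range_succ]

lemma blockApply_prefixOf_mul {k : ℕ} (hk : 0 < k) (u : ℕ → Bool) (n : ℕ) :
    blockApply k σ (prefixOf u (n * k)) = partialImage σ (blockAt k u) n := by
  rw [prefixOf_mul, blockApply_flatten hk, List.map_map]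
  · rfl
  · simp [length_blockAt]

lemma monotone_valFin_partialImage : Monotone fun n => valFin (partialImage σ β n) :=
  monotone_nat_of_le_succ fun n => by
    simpa only [partialImage_succ] using valFin_le_valFin_append _ _

lemma partialImage_eq_of_forall_ge_eq_nil {N : ℕ} (hN : ∀ p ≥ N, σ (β p) = []) {n : ℕ}
    (hn : N ≤ n) : partialImage σ β n = partialImage σ β N := by
  induction n, hn using Nat.le_induction with
  | base => rfl
  | succ n hn ih => rw [partialImage_succ, hN n hn, List.append_nil, ih]

lemma iSup_valFin_partialImage_mem_dyadic01 {N : ℕ} (hN : ∀ p ≥ N, σ (β p) = []) :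
    (⨆ n, valFin (partialImage σ β n)) ∈ Dyadic01 := by
  have hmax : ∀ n, valFin (partialImage σ β n) ≤ valFin (partialImage σ β N) := fun n => by
    calc valFin (partialImage σ β n) ≤ valFin (partialImage σ β (max n N)) :=
          monotone_valFin_partialImage σ β (le_max_left n N)
      _ = valFin (partialImage σ β N) := by
          rw [partialImage_eq_of_forall_ge_eq_nil σ β hN (le_max_right n N)]
  rw [ciSup_eq_of_forall_le_of_forall_lt_exists_gt hmax fun _ h => ⟨N, h⟩]
  exact valFin_mem_dyadic01 _

open Classical in
lemma count_mem_range_apply {a : ℕ → ℕ} (ha : StrictMono a) (t : ℕ) :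
    Nat.count (· ∈ range a) (a t) = t := by
  have hinf : (range a).Infinite := infinite_range_of_injective ha.injective
  have hnth : Nat.nth (· ∈ range a) = a :=
    ((Nat.nth_strictMono hinf).range_inj ha).1 (Nat.range_nth_of_infinite hinf)
  calc Nat.count (· ∈ range a) (a t) = Nat.count (· ∈ range a) (Nat.nth (· ∈ range a) t) := by
        rw [hnth]
    _ = t := Nat.count_nth_of_infinite hinf t

open Classical in
lemma partialImage_eq_partialImage_comp {a : ℕ → ℕ} (ha : StrictMono a)
    (hβ : ∀ p ∉ range a, σ (β p) = []) (m : ℕ) :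
    partialImage σ β m = partialImage σ (β ∘ a) (Nat.count (· ∈ range a) m) := by
  induction m with
  | zero => rfl
  | succ m ih =>
    rw [partialImage_succ, ih, Nat.count_succ]
    by_cases hm : m ∈ range a
    · obtain ⟨t, rfl⟩ := hm
      rw [if_pos ⟨t, rfl⟩, count_mem_range_apply ha, partialImage_succ]
      rfl
    · rw [if_neg hm, hβ m hm, List.append_nil, add_zero]

lemma iSup_valFin_partialImage_eq_comp {a : ℕ → ℕ} (ha : StrictMono a)
    (hβ : ∀ p ∉ range a, σ (β p) = []) :
    ⨆ n, valFin (partialImage σ β n) = ⨆ t, valFin (partialImage σ (β ∘ a) t) := by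
  classical
  simp_rw [partialImage_eq_partialImage_comp σ β ha hβ]
  have hsurj : Function.Surjective (Nat.count (· ∈ range a)) :=
    fun t => ⟨a t, count_mem_range_apply ha t⟩
  exact hsurj.iSup_comp fun t => valFin (partialImage σ (β ∘ a) t)

end PartialImage

lemma tilde_spec {x : ℝ} (hx : ∃ u, NEZ u ∧ valInf u = x) : NEZ (tilde x) ∧ valInf (tilde x) = x := by
  rw [tilde, dif_pos hx]
  exact hx.choose_spec

lemma tilde_valInf {u : ℕ → Bool} (hu : NEZ u) : tilde (valInf u) = u :=
  have hspec := tilde_spec ⟨u, hu, rfl⟩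
  valInf_injOn hspec.1 hu hspec.2

section FSigma

variable {k : ℕ} (hk : 0 < k) (σ : List Bool → List Bool) {w : List Bool}
include hk

lemma exists_nez_of_fSigma_ne_zero {y : ℝ} (hy : fSigma k σ w y ≠ 0) :
    ∃ u, NEZ u ∧ valInf u = y ∧ ∃ p, blockAt k u p ≠ w := by
  unfold fSigma at hy
  split_ifs at hy with hcond
  · exact absurd rfl hy
  push Not at hcond
  obtain ⟨hex, hper⟩ := hcond
  refine ⟨tilde y, (tilde_spec hex).1, (tilde_spec hex).2, ?_⟩
  by_contra! hall
  obtain ⟨i, hi⟩ := hper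
  apply hi
  rw [← ofBlocks_blockAt hk (tilde y)]
  simp only [ofBlocks, hall]

lemma fSigma_valInf (hw : w.length = k) {u : ℕ → Bool} (hu : NEZ u) {p : ℕ}
    (hp : blockAt k u p ≠ w) :
    fSigma k σ w (valInf u) = ⨆ n, valFin (partialImage σ (blockAt k u) n) := by
  have hper : ¬ ∀ i, u i = w.getD (i % k) false := fun hall => by
    apply hp
    rw [show u = ofBlocks k fun _ => w from funext hall, blockAt_ofBlocks hk hw]
  have hcond : ¬ ((¬ ∃ v, NEZ v ∧ valInf v = valInf u) ∨
      ∀ i, tilde (valInf u) i = w.getD (i % k) false) := by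
    rw [tilde_valInf hu]
    exact not_or.2 ⟨not_not.2 ⟨u, hu, rfl⟩, hper⟩
  rw [fSigma, if_neg hcond, tilde_valInf hu]
  simp_rw [blockApply_prefixOf_mul σ hk]

lemma fSigma_valInf_eq_iSup_comp (hw : w.length = k) (hσw : σ w = []) {v : ℕ → Bool}
    (hv : NEZ v) {a : ℕ → ℕ} (ha : StrictMono a) (hoff : ∀ p ∉ range a, blockAt k v p = w)
    (hon : blockAt k v (a 0) ≠ w) :
    fSigma k σ w (valInf v) = ⨆ t, valFin (partialImage σ (blockAt k v ∘ a) t) := by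
  rw [fSigma_valInf hk σ hw hv hon]
  exact iSup_valFin_partialImage_eq_comp σ _ ha fun p hp => by rw [hoff p hp, hσw]

lemma infinite_setOf_blockAt_ne (hw : w.length = k) (hσw : σ w = []) {u : ℕ → Bool} (hu : NEZ u)
    {p : ℕ} (hp : blockAt k u p ≠ w) (hx : fSigma k σ w (valInf u) ∉ Dyadic01) :
    {q | blockAt k u q ≠ w}.Infinite := by
  intro hfin
  obtain ⟨N, hN⟩ := hfin.bddAbove
  rw [fSigma_valInf hk σ hw hu hp] at hx
  refine hx (iSup_valFin_partialImage_mem_dyadic01 σ _ (N := N + 1) fun q hq => ?_)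
  rw [show blockAt k u q = w by by_contra h; have := hN h; omega, hσw]

end FSigma

open Classical in
/-- For strictly monotone `a`, the block sequence carrying `D t` at position `a t` and `w`
everywhere else. -/
noncomputable def spread (a : ℕ → ℕ) (D : ℕ → List Bool) (w : List Bool) (p : ℕ) : List Bool :=
  if p ∈ range a then D (Nat.count (· ∈ range a) p) else w

section Spread

variable {a : ℕ → ℕ} {D : ℕ → List Bool} {w : List Bool}

lemma spread_apply (ha : StrictMono a) (t : ℕ) : spread a D w (a t) = D t := by
  rw [spread, if_pos ⟨t, rfl⟩, count_mem_range_apply ha]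

lemma spread_of_notMem_range {p : ℕ} (hp : p ∉ range a) : spread a D w p = w :=
  if_neg hp

lemma range_eq_setOf_spread_ne (ha : StrictMono a) (hD : ∀ t, D t ≠ w) :
    range a = {p | spread a D w p ≠ w} := by
  ext p
  refine ⟨?_, fun hp => not_not.1 fun h => hp (spread_of_notMem_range h)⟩
  rintro ⟨t, rfl⟩
  simpa [spread_apply ha] using hD t

lemma length_spread {k : ℕ} (hD : ∀ t, (D t).length = k) (hw : w.length = k) (p : ℕ) :
    (spread a D w p).length = k := by
  unfold spread
  split
  · exact hD _
  · exact hw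

end Spread

noncomputable def keptBlock (k : ℕ) (w : List Bool) (u : ℕ → Bool) : ℕ → List Bool :=
  blockAt k u ∘ Nat.nth fun p => blockAt k u p ≠ w

lemma keptBlock_ne {k : ℕ} {w : List Bool} {u : ℕ → Bool} (hJ : {p | blockAt k u p ≠ w}.Infinite)
    (t : ℕ) : keptBlock k w u t ≠ w :=
  Nat.nth_mem_of_infinite hJ t

/-- Position `3t + 2` is never a slot, so it always holds `w`; if `w` contains a one, this keeps
the respaced word from ending in `0^∞`. -/
def slot (S : ℕ → Bool) (t : ℕ) : ℕ := 3 * t + (S t).toNat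

lemma strictMono_slot (S : ℕ → Bool) : StrictMono (slot S) :=
  strictMono_nat_of_lt_succ fun t => by
    have := (S t).toNat_le; simp only [slot]; omega

lemma le_slot (S : ℕ → Bool) (t : ℕ) : t ≤ slot S t := by
  simp only [slot]; omega

lemma three_mul_add_two_notMem_range_slot (S : ℕ → Bool) (n : ℕ) : 3 * n + 2 ∉ range (slot S) := by
  rintro ⟨t, ht⟩
  have := (S t).toNat_le
  simp only [slot] at ht
  omega

lemma slot_injective : Function.Injective slot := fun S S' h => funext fun t => by
  have := congrFun h t
  simp only [slot, Nat.add_left_cancel_iff] at this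
  revert this
  cases S t <;> cases S' t <;> simp

noncomputable def respaced (k : ℕ) (w : List Bool) (u : ℕ → Bool) (S : ℕ → Bool) : ℕ → Bool :=
  ofBlocks k (spread (slot S) (keptBlock k w u) w)

section Respaced

variable {k : ℕ} (hk : 0 < k) {w : List Bool} (hw : w.length = k) {u : ℕ → Bool}
  (hJ : {p | blockAt k u p ≠ w}.Infinite)
include hk hw

lemma blockAt_respaced (S : ℕ → Bool) :
    blockAt k (respaced k w u S) = spread (slot S) (keptBlock k w u) w :=
  funext fun _ => blockAt_ofBlocks hk (length_spread (fun _ => length_blockAt _ _ _) hw _)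

include hJ

lemma nez_respaced (hu : NEZ u) (S : ℕ → Bool) : NEZ (respaced k w u S) := by
  rw [nez_iff_forall_exists_true_mem_blockAt hk, blockAt_respaced hk hw]
  intro n
  by_cases hwt : true ∈ w
  · exact ⟨3 * n + 2, by omega, by
      rwa [spread_of_notMem_range (three_mul_add_two_notMem_range_slot S n)]⟩
  have hj := Nat.nth_strictMono hJ
  obtain ⟨m, hm, hmt⟩ := (nez_iff_forall_exists_true_mem_blockAt hk).1 hu
    (Nat.nth (fun p => blockAt k u p ≠ w) n)
  have hmJ : m ∈ range (Nat.nth fun p => blockAt k u p ≠ w) := by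
    rw [Nat.range_nth_of_infinite hJ]
    exact fun h => hwt (h ▸ hmt)
  obtain ⟨t, rfl⟩ := hmJ
  refine ⟨slot S t, (hj.le_iff_le.1 hm).trans (le_slot S t), ?_⟩
  rwa [spread_apply (strictMono_slot S)]

lemma respaced_injective : Function.Injective (respaced k w u) := fun S S' h => by
  have hspread := congrArg (blockAt k) h
  rw [blockAt_respaced hk hw, blockAt_respaced hk hw] at hspread
  apply slot_injective
  rw [← (strictMono_slot S).range_inj (strictMono_slot S'),
    range_eq_setOf_spread_ne (strictMono_slot S) (keptBlock_ne hJ),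
    range_eq_setOf_spread_ne (strictMono_slot S') (keptBlock_ne hJ), hspread]

lemma fSigma_valInf_respaced (σ : List Bool → List Bool) (hσw : σ w = []) (hu : NEZ u)
    (S : ℕ → Bool) : fSigma k σ w (valInf (respaced k w u S)) = fSigma k σ w (valInf u) := by
  have hS := strictMono_slot S
  have hkept : blockAt k (respaced k w u S) ∘ slot S = keptBlock k w u := by
    funext t
    simp [blockAt_respaced hk hw, spread_apply hS]
  have hoff_respaced : ∀ p ∉ range (slot S), blockAt k (respaced k w u S) p = w := fun p hp => by
    rw [blockAt_respaced hk hw, spread_of_notMem_range hp]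
  have hoff : ∀ p ∉ range (Nat.nth fun q => blockAt k u q ≠ w), blockAt k u p = w :=
    fun p hp => by
      rw [Nat.range_nth_of_infinite hJ] at hp
      exact not_not.1 hp
  rw [fSigma_valInf_eq_iSup_comp hk σ hw hσw (nez_respaced hk hw hJ hu S) hS hoff_respaced
      fun h => keptBlock_ne hJ 0 ((congrFun hkept 0).symm.trans h), hkept,
    fSigma_valInf_eq_iSup_comp hk σ hw hσw hu (Nat.nth_strictMono hJ) hoff (keptBlock_ne hJ 0)]
  rfl

end Respaced

lemma uncountable_nat_bool : Uncountable (ℕ → Bool) := by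
  rw [← Cardinal.aleph0_lt_mk_iff, Cardinal.mk_arrow]
  simpa using Cardinal.cantor Cardinal.aleph0

theorem fSigma_fibers_uncountable_general
    (k : Nat) (sigma : List Bool -> List Bool) (weps : List Bool)
    (hk : 2 ≤ k) (hlen : weps.length = k)
    (herase : ∀ w : List Bool, w.length = k → (sigma w = [] ↔ w = weps)) :
    ∀ x ∈ fSigma k sigma weps '' Set.Icc 0 1, x ∉ Dyadic01 →
      ¬ (Set.Icc (0:ℝ) 1 ∩ fSigma k sigma weps ⁻¹' {x}).Countable := by
  rintro _ ⟨y, -, rfl⟩ hxd hcount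
  have hk0 : 0 < k := by omega
  have hσw : sigma weps = [] := (herase weps hlen).2 rfl
  obtain ⟨u, hu, rfl, p, hp⟩ :=
    exists_nez_of_fSigma_ne_zero hk0 sigma fun h => hxd (h ▸ zero_mem_dyadic01)
  have hJ := infinite_setOf_blockAt_ne hk0 sigma hlen hσw hu hp hxd
  have hmaps : MapsTo (valInf ∘ respaced k weps u) univ
      (Icc 0 1 ∩ fSigma k sigma weps ⁻¹' {fSigma k sigma weps (valInf u)}) := fun S _ =>
    ⟨⟨valInf_nonneg _, valInf_le_one _⟩, fSigma_valInf_respaced hk0 hlen hJ sigma hσw hu S⟩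
  have hinj : Function.Injective (valInf ∘ respaced k weps u) := fun S S' h =>
    respaced_injective hk0 hlen hJ
      (valInf_injOn (nez_respaced hk0 hlen hJ hu S) (nez_respaced hk0 hlen hJ hu S') h)
  have := uncountable_nat_bool
  exact not_countable_univ (hmaps.countable_of_injOn hinj.injOn hcount)

/-- every non-dyadic point of the image of `fSigma` has an
uncountable fiber. -/
theorem fSigma_fibers_uncountable
    (k : Nat) (sigma : List Bool -> List Bool) (weps : List Bool)
    (hk : 2 ≤ k) (hlen : weps.length = k)
    (hne1 : weps ≠ List.replicate k true)
    (herase : ∀ w : List Bool, w.length = k → (sigma w = [] ↔ w = weps)) :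
    ∀ x ∈ fSigma k sigma weps '' Set.Icc 0 1, x ∉ Dyadic01 →
      ¬ (Set.Icc (0:ℝ) 1 ∩ fSigma k sigma weps ⁻¹' {x}).Countable :=
  fSigma_fibers_uncountable_general k sigma weps hk hlen herase
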